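/- Counterexamples can avoid insuff places: if P_β(prog) has a counterexample to the safety specification S_safe (a firing sequence with semantically consistent states reaching some place ⟨↯,θ,k⟩), then it has such a counterexample in which no intermediate marking contains any place insuff(θ'). -/
import Mathlib


/-! Core semantics of the concurrent language with fork/join. -/

namespace Conc

abbrev Var := String
abbrev Val := ℤ
/-- Integer-valued expressions (shallow embedding, evaluated in a combined state). -/
abbrev AExp := (Var → Val) → Val
/-- Boolean-valued expressions. -/
abbrev BExp := (Var → Val) → Prop

/-- Commands of the language, parameterized by the type `T` of thread template names. -/
inductive Cmd (T : Type) where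
  | assign : Var → AExp → Cmd T
  | assume_ : BExp → Cmd T
  | assert_ : BExp → Cmd T
  | ite : BExp → Cmd T → Cmd T → Cmd T
  | while_ : BExp → Cmd T → Cmd T
  | fork : AExp → T → Cmd T
  | join : AExp → Cmd T
  | seq : Cmd T → Cmd T → Cmd T

/-- A remainder program: a command, successful termination `Ω`, or failure `↯`. -/
inductive Rem (T : Type) where
  | run : Cmd T → Rem T
  | term : Rem T   -- Ω
  | fail : Rem T   -- ↯

/-- Sequential composition `C ; X` of a command with a remainder, with `C ; Ω = C`. -/
def Rem.after {T : Type} (C : Cmd T) : Rem T → Rem T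
  | .run C' => .run (C.seq C')
  | _ => .run C

/-- A local configuration `⟨X, θ, t, s⟩`. -/
structure LConf (T : Type) where
  rem : Rem T
  tmpl : T
  tid : Option Val
  st : Var → Val

/-- A program: bodies of thread templates, the main template, and the global variables. -/
structure Prog (T : Type) where
  body : T → Cmd T
  main : T
  isGlobal : Var → Bool

/-- Combined state `s ∪ g`. -/
def Prog.comb {T : Type} (P : Prog T) (g s : Var → Val) : Var → Val :=
  fun x => if P.isGlobal x then g x else s x

/-- Kinds of simple statements labelling a step. -/
inductive Lab (T : Type) where
  | atomic : Lab T
  | forkL : T → Lab T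
  | joinL : Lab T

/-- Global configurations: a multiset of local configurations and a global state. -/
abbrev GConf (T : Type) := Multiset (LConf T) × (Var → Val)

/-- The small-step semantic transition relation. -/
inductive Step {T : Type} (P : Prog T) : Lab T → GConf T → GConf T → Prop where
  | assume_ {e : BExp} {X θ t s g} (h : e (P.comb g s)) :
      Step P .atomic ({⟨Rem.after (.assume_ e) X, θ, t, s⟩}, g) ({⟨X, θ, t, s⟩}, g)
  | assignGlobal {x e X θ t s g} (hx : P.isGlobal x = true) :
      Step P .atomic ({⟨Rem.after (.assign x e) X, θ, t, s⟩}, g)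
        ({⟨X, θ, t, s⟩}, Function.update g x (e (P.comb g s)))
  | assignLocal {x e X θ t s g} (hx : P.isGlobal x = false) :
      Step P .atomic ({⟨Rem.after (.assign x e) X, θ, t, s⟩}, g)
        ({⟨X, θ, t, Function.update s x (e (P.comb g s))⟩}, g)
  | assert₁ {e : BExp} {X θ t s g} (h : e (P.comb g s)) :
      Step P .atomic ({⟨Rem.after (.assert_ e) X, θ, t, s⟩}, g) ({⟨X, θ, t, s⟩}, g)
  | assert₂ {e : BExp} {X θ t s g} (h : ¬ e (P.comb g s)) :
      Step P .atomic ({⟨Rem.after (.assert_ e) X, θ, t, s⟩}, g) ({⟨.fail, θ, t, s⟩}, g)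
  | ite₁ {e C₁ C₂ X θ t s g} (h : e (P.comb g s)) :
      Step P .atomic ({⟨Rem.after (.ite e C₁ C₂) X, θ, t, s⟩}, g)
        ({⟨Rem.after C₁ X, θ, t, s⟩}, g)
  | ite₂ {e C₁ C₂ X θ t s g} (h : ¬ e (P.comb g s)) :
      Step P .atomic ({⟨Rem.after (.ite e C₁ C₂) X, θ, t, s⟩}, g)
        ({⟨Rem.after C₂ X, θ, t, s⟩}, g)
  | while₁ {e C X θ t s g} (h : e (P.comb g s)) :
      Step P .atomic ({⟨Rem.after (.while_ e C) X, θ, t, s⟩}, g)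
        ({⟨Rem.after C (Rem.after (.while_ e C) X), θ, t, s⟩}, g)
  | while₂ {e C X θ t s g} (h : ¬ e (P.comb g s)) :
      Step P .atomic ({⟨Rem.after (.while_ e C) X, θ, t, s⟩}, g) ({⟨X, θ, t, s⟩}, g)
  | fork {e θ' X θ t s s' g} :
      Step P (.forkL θ') ({⟨Rem.after (.fork e θ') X, θ, t, s⟩}, g)
        ({⟨X, θ, t, s⟩, ⟨.run (P.body θ'), θ', some (e (P.comb g s)), s'⟩}, g)
  | join {e X θ t s θ' s' g} :
      Step P .joinL
        ({⟨Rem.after (.join e) X, θ, t, s⟩, ⟨.term, θ', some (e (P.comb g s)), s'⟩}, g)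
        ({⟨X, θ, t, s⟩}, g)
  | frame {l M₁ M₁' M₂ g g'} :
      Step P l (M₁, g) (M₁', g') → Step P l (M₁ + M₂, g) (M₁' + M₂, g')

/-- Initial global configurations. -/
def IsInit {T : Type} (P : Prog T) (c : GConf T) : Prop :=
  ∃ s, c.1 = {⟨.run (P.body P.main), P.main, none, s⟩}

/-- `cfg 0 → cfg 1 → … → cfg n` is an execution with statement kinds `lab`. -/
def IsExec {T : Type} (P : Prog T) (n : ℕ) (cfg : ℕ → GConf T) (lab : ℕ → Lab T) : Prop :=
  IsInit P (cfg 0) ∧ ∀ i < n, Step P (lab i) (cfg i) (cfg (i + 1))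

/-- The number of local configurations with thread template `θ` in `M`. -/
def tmplCount {T : Type} [DecidableEq T] (M : Multiset (LConf T)) (θ : T) : ℕ :=
  Multiset.card (M.filter (fun c => c.tmpl = θ))

/-- The thread width of the program `P` is at most `β`. -/
def WidthLe {T : Type} [DecidableEq T] (P : Prog T) (β : ℕ) : Prop :=
  ∀ n cfg lab, IsExec P n cfg lab → ∀ i ≤ n, ∀ θ, tmplCount (cfg i).1 θ ≤ β

/-- `P` is correct: no execution reaches the failure marker `↯`. -/
def Correct {T : Type} (P : Prog T) : Prop :=
  ¬ ∃ n cfg lab, IsExec P n cfg lab ∧ ∃ i ≤ n, ∃ c ∈ (cfg i).1, c.rem = Rem.fail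

end Conc

/-! Petrification: the petrified program `P_β(prog)` as a Petri program. -/

namespace Conc

/-- Places of the petrified program with thread limit `β`. -/
inductive PPlace (T : Type) (β : ℕ) where
  | loc : Rem T → T → Option (Fin β) → PPlace T β
  | inUse : T → Fin β → PPlace T β
  | notInUse : T → Fin β → PPlace T β
  | insuff : T → PPlace T β

/-- Instantiated variables of the petrified program. -/
inductive IVar (T : Type) (β : ℕ) where
  | glob : Var → IVar T β
  | inst : Var → T → Option (Fin β) → IVar T β
  | idv : T → Fin β → IVar T β
deriving DecidableEq

/-- States of the petrified (Petri) program. -/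
abbrev IState (T : Type) (β : ℕ) := IVar T β → Val

/-- De-instantiated view of an instantiated state for thread instance `(θ, k)`. -/
def iev {T : Type} {β : ℕ} (P : Prog T) (σ : IState T β) (θ : T) (k : Option (Fin β)) :
    Var → Val :=
  fun x => if P.isGlobal x then σ (.glob x) else σ (.inst x θ k)

/-- Semantics of the instantiated assignment `[x := e]_{θ,k}`. -/
def assignRel {T : Type} {β : ℕ} [DecidableEq T] (P : Prog T) (x : Var) (e : AExp)
    (θ : T) (k : Option (Fin β)) : IState T β → IState T β → Prop :=
  fun σ σ' =>
    σ' = if P.isGlobal x then Function.update σ (.glob x) (e (iev P σ θ k))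
         else Function.update σ (.inst x θ k) (e (iev P σ θ k))

/-- Semantics of the instantiated statement `[assume e]_{θ,k}`. -/
def assumeRel {T : Type} {β : ℕ} (P : Prog T) (e : BExp) (θ : T) (k : Option (Fin β)) :
    IState T β → IState T β → Prop :=
  fun σ σ' => σ' = σ ∧ e (iev P σ θ k)

/-- Semantics of the fork label `id_{θ'}^{k'} := [e]_{θ,k}`. -/
def forkRel {T : Type} {β : ℕ} [DecidableEq T] (P : Prog T) (e : AExp)
    (θ : T) (k : Option (Fin β)) (θ' : T) (k' : Fin β) : IState T β → IState T β → Prop :=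
  fun σ σ' => σ' = Function.update σ (.idv θ' k') (e (iev P σ θ k))

/-- Semantics of the join label `assume id_{θ'}^{k'} == [e]_{θ,k}`. -/
def joinRel {T : Type} {β : ℕ} (P : Prog T) (e : AExp)
    (θ : T) (k : Option (Fin β)) (θ' : T) (k' : Fin β) : IState T β → IState T β → Prop :=
  fun σ σ' => σ' = σ ∧ σ (.idv θ' k') = e (iev P σ θ k)

/-- The control-flow relation of petrification: `pre ⟶[R] post`, where transitions are
labelled with the semantic relation `R` of their instantiated simple statement. -/
inductive PTrans {T : Type} {β : ℕ} [DecidableEq T] (P : Prog T) :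
    Set (PPlace T β) → (IState T β → IState T β → Prop) → Set (PPlace T β) → Prop where
  | assume_ (e : BExp) (X : Rem T) (θ : T) (k : Option (Fin β)) :
      PTrans P {.loc (Rem.after (.assume_ e) X) θ k} (assumeRel P e θ k) {.loc X θ k}
  | assign (x : Var) (e : AExp) (X : Rem T) (θ : T) (k : Option (Fin β)) :
      PTrans P {.loc (Rem.after (.assign x e) X) θ k} (assignRel P x e θ k) {.loc X θ k}
  | assert₁ (e : BExp) (X : Rem T) (θ : T) (k : Option (Fin β)) :
      PTrans P {.loc (Rem.after (.assert_ e) X) θ k} (assumeRel P e θ k) {.loc X θ k}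
  | assert₂ (e : BExp) (X : Rem T) (θ : T) (k : Option (Fin β)) :
      PTrans P {.loc (Rem.after (.assert_ e) X) θ k}
        (assumeRel P (fun v => ¬ e v) θ k) {.loc Rem.fail θ k}
  | ite₁ (e : BExp) (C₁ C₂ : Cmd T) (X : Rem T) (θ : T) (k : Option (Fin β)) :
      PTrans P {.loc (Rem.after (.ite e C₁ C₂) X) θ k} (assumeRel P e θ k)
        {.loc (Rem.after C₁ X) θ k}
  | ite₂ (e : BExp) (C₁ C₂ : Cmd T) (X : Rem T) (θ : T) (k : Option (Fin β)) :
      PTrans P {.loc (Rem.after (.ite e C₁ C₂) X) θ k} (assumeRel P (fun v => ¬ e v) θ k)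
        {.loc (Rem.after C₂ X) θ k}
  | while₁ (e : BExp) (C : Cmd T) (X : Rem T) (θ : T) (k : Option (Fin β)) :
      PTrans P {.loc (Rem.after (.while_ e C) X) θ k} (assumeRel P e θ k)
        {.loc (Rem.after C (Rem.after (.while_ e C) X)) θ k}
  | while₂ (e : BExp) (C : Cmd T) (X : Rem T) (θ : T) (k : Option (Fin β)) :
      PTrans P {.loc (Rem.after (.while_ e C) X) θ k} (assumeRel P (fun v => ¬ e v) θ k)
        {.loc X θ k}
  | fork (e : AExp) (θ' : T) (X : Rem T) (θ : T) (k : Option (Fin β)) (k' : Fin β) :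
      PTrans P
        ({.loc (Rem.after (.fork e θ') X) θ k, .notInUse θ' k'} ∪
          (PPlace.inUse θ') '' {j | j < k'})
        (forkRel P e θ k θ' k')
        ({.loc X θ k, .loc (.run (P.body θ')) θ' (some k'), .inUse θ' k'} ∪
          (PPlace.inUse θ') '' {j | j < k'})
  | insufficiency (e : AExp) (θ' : T) (X : Rem T) (θ : T) (k : Option (Fin β)) :
      PTrans P
        ({.loc (Rem.after (.fork e θ') X) θ k} ∪ (PPlace.inUse θ') '' Set.univ)
        (fun σ σ' => σ' = σ)
        {.insuff θ'}
  | join (e : AExp) (X : Rem T) (θ : T) (k : Option (Fin β)) (θ' : T) (k' : Fin β) :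
      PTrans P {.loc (Rem.after (.join e) X) θ k, .loc Rem.term θ' (some k'), .inUse θ' k'}
        (joinRel P e θ k θ' k')
        {.loc X θ k, .notInUse θ' k'}

/-- Initial marking of the petrified program. -/
def initMark {T : Type} (P : Prog T) (β : ℕ) : Set (PPlace T β) :=
  {PPlace.loc (.run (P.body P.main)) P.main none} ∪ {p | ∃ θ k, p = PPlace.notInUse θ k}

/-- Reachability of a marking together with a semantically consistent state
(markings of the 1-safe petrified program are identified with sets of places). -/
inductive PReach {T : Type} [DecidableEq T] (P : Prog T) (β : ℕ) :
    Set (PPlace T β) → IState T β → Prop where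
  | init (σ : IState T β) : PReach P β (initMark P β) σ
  | step {m σ pre R post σ'} : PReach P β m σ → PTrans P pre R post → pre ⊆ m →
      R σ σ' → PReach P β ((m \ pre) ∪ post) σ'

/-- The petrified program satisfies the specification `S` (a set of bad places):
no semantically executable firing sequence reaches a marking intersecting `S`. -/
def Satisfies {T : Type} [DecidableEq T] (P : Prog T) (β : ℕ) (S : Set (PPlace T β)) : Prop :=
  ¬ ∃ m σ, PReach P β m σ ∧ (m ∩ S).Nonempty

/-- The safety specification `S_safe`. -/
def Ssafe (T : Type) (β : ℕ) : Set (PPlace T β) :=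
  {p | ∃ θ k, p = PPlace.loc Rem.fail θ k}

/-- The bound specification `S_bound`. -/
def Sbound (T : Type) (β : ℕ) : Set (PPlace T β) :=
  {p | ∃ θ, p = PPlace.insuff θ}

end Conc

namespace Conc

/-- Reachability of a marking and state such that no marking along the firing sequence
(including the reached one) contains any place `insuff(θ')`. -/
inductive PReachAvoid {T : Type} [DecidableEq T] (P : Prog T) (β : ℕ) :
    Set (PPlace T β) → IState T β → Prop where
  | init (σ : IState T β) : PReachAvoid P β (initMark P β) σ
  | step {m σ pre R post σ'} : PReachAvoid P β m σ → PTrans P pre R post → pre ⊆ m →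
      R σ σ' → (∀ θ' : T, PPlace.insuff θ' ∉ (m \ pre) ∪ post) →
      PReachAvoid P β ((m \ pre) ∪ post) σ'

end Conc

namespace Conc

lemma ptrans_insuff_not_pre {T : Type} {β : ℕ} [DecidableEq T] {P : Prog T}
    {pre post : Set (PPlace T β)} {R : IState T β → IState T β → Prop}
    (h : PTrans P pre R post) (θ : T) : PPlace.insuff θ ∉ pre := by
  cases h <;> simp_all [Set.mem_insert_iff]

lemma ptrans_post_cases {T : Type} {β : ℕ} [DecidableEq T] {P : Prog T}
    {pre post : Set (PPlace T β)} {R : IState T β → IState T β → Prop}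
    (h : PTrans P pre R post) :
    (∃ θ', post = {PPlace.insuff θ'} ∧ ∀ σ σ', R σ σ' → σ' = σ) ∨
    (∀ θ, PPlace.insuff θ ∉ post) := by
  cases h
  case insufficiency e θ' X θ k =>
    exact Or.inl ⟨θ', rfl, fun σ σ' hσ => hσ⟩
  all_goals right; intro θ₀; simp_all [Set.mem_insert_iff]

lemma preach_mirror {T : Type} [DecidableEq T] (P : Prog T) (β : ℕ)
    {m : Set (PPlace T β)} {σ : IState T β} (h : PReach P β m σ) :
    ∃ m', PReachAvoid P β m' σ ∧ (m \ Sbound T β) ⊆ m' ∧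
      ∀ θ, PPlace.insuff θ ∉ m' := by
  induction h with
  | init σ =>
    refine ⟨initMark P β, PReachAvoid.init σ, Set.diff_subset, ?_⟩
    intro θ hθ
    rcases hθ with h1 | h2
    · simp at h1
    · rcases h2 with ⟨θ', k', h⟩; simp at h
  | @step m σ pre R post σ' _ ht hsub hR ih =>
    rcases ih with ⟨m', hm', hsub', hno⟩
    rcases ptrans_post_cases ht with ⟨θ', hpost, hid⟩ | hnopost
    · -- insufficiency transition: omit it
      refine ⟨m', ?_, ?_, hno⟩
      · rw [hid σ σ' hR]; exact hm'
      · intro p hp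
        rcases hp with ⟨hp1 | hp2, hp3⟩
        · exact hsub' ⟨hp1.1, hp3⟩
        · exfalso; rw [hpost] at hp2
          exact hp3 ⟨θ', hp2⟩
    · -- any other transition: fire it from m'
      have hpre' : pre ⊆ m' := by
        intro p hp
        apply hsub'
        refine ⟨hsub hp, ?_⟩
        rintro ⟨θ, rfl⟩
        exact ptrans_insuff_not_pre ht θ hp
      have hnonew : ∀ θ'', PPlace.insuff θ'' ∉ (m' \ pre) ∪ post := by
        intro θ'' hθ
        rcases hθ with h1 | h2
        · exact hno θ'' h1.1
        · exact hnopost θ'' h2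
      refine ⟨(m' \ pre) ∪ post, PReachAvoid.step hm' ht hpre' hR hnonew, ?_, hnonew⟩
      intro p hp
      rcases hp with ⟨hp1 | hp2, hp3⟩
      · exact Or.inl ⟨hsub' ⟨hp1.1, hp3⟩, hp1.2⟩
      · exact Or.inr hp2

end Conc

open Conc in
/-- if `P_β(prog)` has a counterexample to the safety specification, then
it has one in which no intermediate marking contains any `insuff` place. -/
theorem counterexample_avoiding_insuff {T : Type} [DecidableEq T] (P : Prog T) (β : ℕ)
    (h : ∃ m σ, PReach P β m σ ∧ (m ∩ Ssafe T β).Nonempty) :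
    ∃ m σ, PReachAvoid P β m σ ∧ (m ∩ Ssafe T β).Nonempty := by
  rcases h with ⟨m, σ, hreach, p, hpm, hps⟩
  rcases preach_mirror P β hreach with ⟨m', hm', hsub, -⟩
  refine ⟨m', σ, hm', p, hsub ⟨hpm, ?_⟩, hps⟩
  rintro ⟨θ, rfl⟩
  rcases hps with ⟨θ', k', h⟩
  simp at h
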